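/- arXiv:2209.00328 — 4 statements merged into one kernel-verified Lean document; each statement's English description precedes it below -/
import Mathlib

section
/- Let m and n be integers such that m is not a perfect square and m < 2n. Then the Diophantine equation x² − (n² + 1)y² = m has no solution in integers, and likewise x² − (n² + 1)y² = −m has no solution in integers. -/
/-!
Let `d = n² + 1`. Multiplication by the unit `√d - n` of norm `-1` sends a solution `(a, b)` of
`a² - d b² = N`, with `a, b ≥ 0`, to the solution `(d b - n a, a - n b)` of the same equation
with `-N`. When `|N| < 2n`, the new second coordinate is smaller than `b` in absolute value, so
descending we reach `y = 0`, where `|N| = x²` is a square.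
-/

def pellForm (n x y : ℤ) : ℤ := x ^ 2 - (n ^ 2 + 1) * y ^ 2

theorem pellForm_abs_abs (n x y : ℤ) : pellForm n |x| |y| = pellForm n x y := by
  simp only [pellForm, sq_abs]

theorem pellForm_reflect (n a b : ℤ) :
    pellForm n ((n ^ 2 + 1) * b - n * a) (a - n * b) = -pellForm n a b := by
  unfold pellForm; ring

/-- For `a ≥ 0` and `b > 0`, `|a - n b| < b` means `(n - 1)² b² < a² < (n + 1)² b²`, that is
`|a² - (n² + 1) b²| < 2 n b²`. -/
theorem abs_sub_mul_lt_of_abs_pellForm_lt {n a b : ℤ} (ha : 0 ≤ a) (hb : 0 < b)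
    (h : |pellForm n a b| < 2 * n * b ^ 2) : |a - n * b| < b := by
  unfold pellForm at h
  obtain ⟨hlo, hhi⟩ := abs_lt.mp h
  have hn : 0 < n := by
    by_contra! hn
    nlinarith [abs_nonneg (a ^ 2 - (n ^ 2 + 1) * b ^ 2)]
  refine abs_sub_lt_iff.mpr ⟨?_, ?_⟩
  · by_contra! hab
    have hab : (n + 1) * b ≤ a := by linarith
    nlinarith [mul_le_mul hab hab (by positivity) ha]
  · by_contra! hab
    have hab : a ≤ (n - 1) * b := by linarith
    nlinarith [mul_le_mul hab hab ha (ha.trans hab)]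

theorem isSquare_abs_pellForm_of_abs_lt {n : ℤ} (x y : ℤ) (h : |pellForm n x y| < 2 * n) :
    IsSquare |pellForm n x y| := by
  rcases eq_or_ne y 0 with rfl | hy
  · exact ⟨|x|, by simp [pellForm, ← sq, sq_abs]⟩
  have hb : 0 < |y| := abs_pos.mpr hy
  have hlt : |pellForm n (|x|) (|y|)| < 2 * n * |y| ^ 2 := by
    have hn : 0 < n := by linarith [abs_nonneg (pellForm n x y)]
    have hy1 : 1 ≤ |y| ^ 2 := one_le_pow₀ hb
    rw [pellForm_abs_abs]
    nlinarith
  have hdesc := abs_sub_mul_lt_of_abs_pellForm_lt (abs_nonneg x) hb hlt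
  have hform := pellForm_reflect n |x| |y|
  rw [pellForm_abs_abs] at hform
  have := isSquare_abs_pellForm_of_abs_lt ((n ^ 2 + 1) * |y| - n * |x|) (|x| - n * |y|)
    (by rwa [hform, abs_neg])
  rwa [hform, abs_neg] at this
termination_by y.natAbs
decreasing_by zify; simpa only [Int.natCast_natAbs] using hdesc

theorem no_solution_pell_type_one_general (m n : ℤ) (hm : 0 < m)
    (hsq : ¬ IsSquare m) (hlt : m < 2 * n) :
    (¬ ∃ x y : ℤ, x ^ 2 - (n ^ 2 + 1) * y ^ 2 = m) ∧
    (¬ ∃ x y : ℤ, x ^ 2 - (n ^ 2 + 1) * y ^ 2 = -m) := by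
  have abs_pellForm_ne : ∀ x y : ℤ, |pellForm n x y| ≠ m := fun x y h =>
    hsq (h ▸ isSquare_abs_pellForm_of_abs_lt x y (h ▸ hlt))
  refine ⟨fun ⟨x, y, h⟩ => abs_pellForm_ne x y ?_, fun ⟨x, y, h⟩ => abs_pellForm_ne x y ?_⟩
  · rw [pellForm, h, abs_of_pos hm]
  · rw [pellForm, h, abs_neg, abs_of_pos hm]

/-- If `m` is a positive non-square integer with `m < 2n`, then the Diophantine equation
`x² - (n² + 1)y² = ±m` has no integer solutions. -/
theorem no_solution_pell_type_one (m n : ℤ) (hm : 0 < m) (hn : 0 < n)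
    (hsq : ¬ IsSquare m) (hlt : m < 2 * n) :
    (¬ ∃ x y : ℤ, x ^ 2 - (n ^ 2 + 1) * y ^ 2 = m) ∧
    (¬ ∃ x y : ℤ, x ^ 2 - (n ^ 2 + 1) * y ^ 2 = -m) :=
  no_solution_pell_type_one_general m n hm hsq hlt
end

section
/- Let m and n be integers such that m is not a perfect square, n ≥ 2, and m < n. Then the Diophantine equation x² − (n² + 4)y² = 4m has no solution in integers, and likewise x² − (n² + 4)y² = −4m has no solution in integers. -/
/-!
Multiplication by the unit `(n - √(n² + 4)) / 2`, of norm `-1`, sends a solution of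
`x² - (n² + 4) y² = N` to one of `x² - (n² + 4) y² = -N`. For even `N` with `|N| < 4n` the new
solution is again integral and has strictly smaller `|y|`, so descending we reach `y = 0`, where
`N` or `-N` is a perfect square. For `N = ±4m` with `0 < m` this forces `m` to be a square.
-/

theorem even_sub_mul_of_even_sq_sub_mul_sq {x y n : ℤ} (h : Even (x ^ 2 - (n ^ 2 + 4) * y ^ 2)) :
    Even (x - n * y) := by
  have hsplit : x ^ 2 - (n ^ 2 + 4) * y ^ 2 =
      (x - n * y) ^ 2 + 2 * (n * y * (x - n * y) - 2 * y ^ 2) := by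
    ring
  rw [hsplit, Int.even_add, Int.even_pow' two_ne_zero] at h
  exact h.mpr (even_two_mul _)

theorem abs_sub_mul_lt_of_abs_sq_sub_mul_sq_lt {x y n : ℤ} (hx : 0 ≤ x) (hy : 0 ≤ y)
    (h : |x ^ 2 - (n ^ 2 + 4) * y ^ 2| < 4 * n * y ^ 2) : |x - n * y| < 2 * y := by
  have hn : 0 < n := by nlinarith [abs_nonneg (x ^ 2 - (n ^ 2 + 4) * y ^ 2)]
  obtain ⟨hlo, hhi⟩ := abs_lt.mp h
  have hlow : (n - 2) * y < x := lt_of_pow_lt_pow_left₀ 2 hx (by nlinarith)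
  have hhigh : x < (n + 2) * y := lt_of_pow_lt_pow_left₀ 2 (by positivity) (by nlinarith)
  exact abs_lt.mpr ⟨by linarith, by linarith⟩

theorem isSquare_or_isSquare_neg_of_sq_sub_mul_sq_eq {n N : ℤ} (hN : Even N) (hNlt : |N| < 4 * n)
    (x y : ℤ) (h : x ^ 2 - (n ^ 2 + 4) * y ^ 2 = N) : IsSquare N ∨ IsSquare (-N) := by
  rcases eq_or_ne y 0 with rfl | hy
  · exact Or.inl ⟨x, by rw [← h]; ring⟩
  have habs : |x| ^ 2 - (n ^ 2 + 4) * |y| ^ 2 = N := by rwa [sq_abs, sq_abs]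
  obtain ⟨c, hc⟩ := even_sub_mul_of_even_sq_sub_mul_sq (habs ▸ hN)
  have hy1 : 1 ≤ |y| ^ 2 := one_le_pow₀ (Int.one_le_abs hy)
  have hcy : |c| < |y| := by
    have := abs_sub_mul_lt_of_abs_sq_sub_mul_sq_lt (abs_nonneg x) (abs_nonneg y)
      (by rw [habs]; nlinarith [abs_nonneg N])
    rw [hc, ← two_mul, abs_mul, abs_two] at this
    linarith
  -- `(n c - 2|y|) - c √(n² + 4) = (|x| + |y| √(n² + 4)) (n - √(n² + 4)) / 2`
  have hstep : (n * c - 2 * |y|) ^ 2 - (n ^ 2 + 4) * c ^ 2 = -N := by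
    linear_combination (|x| + n * |y| + 2 * c) * hc - habs
  have := isSquare_or_isSquare_neg_of_sq_sub_mul_sq_eq hN.neg (by rwa [abs_neg]) _ _ hstep
  rwa [neg_neg, or_comm] at this
termination_by y.natAbs
decreasing_by exact Int.natAbs_lt_iff_sq_lt.mpr (sq_lt_sq.mpr hcy)

theorem isSquare_of_isSquare_four_mul {m : ℤ} (h : IsSquare (4 * m)) : IsSquare m := by
  obtain ⟨r, hr⟩ := h
  obtain ⟨t, rfl⟩ : 2 ∣ r := Int.prime_two.dvd_of_dvd_pow (n := 2) ⟨m * 2, by rw [sq, ← hr]; ring⟩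
  exact ⟨t, by linarith⟩

theorem no_solution_pell_type_two_general (m n : ℤ) (hm : 0 < m)
    (hsq : ¬ IsSquare m) (hlt : m < n) :
    (¬ ∃ x y : ℤ, x ^ 2 - (n ^ 2 + 4) * y ^ 2 = 4 * m) ∧
    (¬ ∃ x y : ℤ, x ^ 2 - (n ^ 2 + 4) * y ^ 2 = -(4 * m)) := by
  have hpos : ¬ IsSquare (4 * m) := fun h => hsq (isSquare_of_isSquare_four_mul h)
  have hneg : ¬ IsSquare (-(4 * m)) := fun h => by linarith [h.nonneg]
  have heven : Even (4 * m) := ⟨2 * m, by ring⟩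
  have hbound : |4 * m| < 4 * n := by rw [abs_of_pos (by linarith)]; linarith
  refine ⟨fun ⟨x, y, h⟩ => ?_, fun ⟨x, y, h⟩ => ?_⟩
  · exact (isSquare_or_isSquare_neg_of_sq_sub_mul_sq_eq heven hbound x y h).elim hpos hneg
  · refine (isSquare_or_isSquare_neg_of_sq_sub_mul_sq_eq heven.neg
      (by rwa [abs_neg]) x y h).elim hneg ?_
    rwa [neg_neg]

/-- If `m` is a positive non-square integer with `n ≥ 2` and `m < n`, then the Diophantine
equation `x² - (n² + 4)y² = ±4m` has no integer solutions. -/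
theorem no_solution_pell_type_two (m n : ℤ) (hm : 0 < m) (hn : 2 ≤ n)
    (hsq : ¬ IsSquare m) (hlt : m < n) :
    (¬ ∃ x y : ℤ, x ^ 2 - (n ^ 2 + 4) * y ^ 2 = 4 * m) ∧
    (¬ ∃ x y : ℤ, x ^ 2 - (n ^ 2 + 4) * y ^ 2 = -(4 * m)) :=
  no_solution_pell_type_two_general m n hm hsq hlt
end

section
/- In the real quadratic field F = ℚ(√79), the prime ideals above 3 are non-principal. Equivalently, there are no integers x, y with x² − 79y² = ±3. -/
open NumberField Polynomial

lemma sqrt79_descent (N : ℤ) (hN : N = 3 ∨ N = -3) :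
    ∀ n : ℕ, ∀ x : ℤ, x ^ 2 - 79 * (n : ℤ) ^ 2 ≠ N := by
  have hN1 : -3 ≤ N := by rcases hN with rfl | rfl <;> norm_num
  have hN2 : N ≤ 3 := by rcases hN with rfl | rfl <;> norm_num
  intro n
  induction n using Nat.strong_induction_on with
  | _ n ih =>
    intro x hx
    have hsq : ((x.natAbs : ℤ)) ^ 2 = x ^ 2 := by simp [Int.natAbs_sq, sq_abs]
    rcases Nat.lt_or_ge n 2 with hn | hn
    · interval_cases n
      · have hm : (x.natAbs : ℤ) ^ 2 = N := by rw [hsq]; push_cast at hx; linarith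
        rcases hN with rfl | rfl
        · have hm' : x.natAbs ^ 2 = 3 := by exact_mod_cast hm
          rcases Nat.lt_or_ge x.natAbs 2 with hb | hb
          · have := Nat.pow_le_pow_left (show x.natAbs ≤ 1 by omega) 2; omega
          · have := Nat.pow_le_pow_left hb 2; simp at this; omega
        · nlinarith [sq_nonneg (x.natAbs : ℤ)]
      · have hm : (x.natAbs : ℤ) ^ 2 = 79 + N := by rw [hsq]; push_cast at hx ⊢; linarith
        rcases hN with rfl | rfl
        · have hm' : x.natAbs ^ 2 = 82 := by exact_mod_cast hm
          rcases Nat.lt_or_ge x.natAbs 10 with hb | hb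
          · have := Nat.pow_le_pow_left (show x.natAbs ≤ 9 by omega) 2; simp at this; omega
          · have := Nat.pow_le_pow_left hb 2; simp at this; omega
        · have hm' : x.natAbs ^ 2 = 76 := by
            have h76 : (x.natAbs : ℤ) ^ 2 = 76 := by rw [hm]; norm_num
            exact_mod_cast h76
          rcases Nat.lt_or_ge x.natAbs 9 with hb | hb
          · have := Nat.pow_le_pow_left (show x.natAbs ≤ 8 by omega) 2; simp at this; omega
          · have := Nat.pow_le_pow_left hb 2; simp at this; omega
    · set X : ℤ := |x| with hX
      have hX0 : 0 ≤ X := abs_nonneg x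
      have hx' : X ^ 2 - 79 * (n : ℤ) ^ 2 = N := by rw [hX, sq_abs]; exact hx
      have hn' : (2 : ℤ) ≤ (n : ℤ) := by exact_mod_cast hn
      have k1 : (79 * (n:ℤ)) ^ 2 < (9 * X) ^ 2 := by nlinarith [sq_nonneg ((n:ℤ) - 2)]
      have k2 : (9 * X) ^ 2 < (81 * (n:ℤ)) ^ 2 := by nlinarith [sq_nonneg ((n:ℤ) - 2)]
      have h1 : 79 * (n:ℤ) < 9 * X := lt_of_pow_lt_pow_left₀ 2 (by positivity) k1
      have h2 : 9 * X < 81 * (n:ℤ) := lt_of_pow_lt_pow_left₀ 2 (by positivity) k2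
      set y' : ℤ := 9 * X - 80 * (n:ℤ) with hy'
      have hylt : y'.natAbs < n := by omega
      have heq : (80 * X - 711 * (n:ℤ)) ^ 2 - 79 * ((y'.natAbs : ℤ)) ^ 2 = N := by
        have h : ((y'.natAbs : ℤ)) ^ 2 = y' ^ 2 := by simp [Int.natAbs_sq, sq_abs]
        rw [h, hy']
        linear_combination hx'
      exact ih y'.natAbs hylt (80 * X - 711 * (n:ℤ)) heq

lemma no_int_sol_79 (N : ℤ) (hN : N = 3 ∨ N = -3) :
    ¬ ∃ x y : ℤ, x ^ 2 - 79 * y ^ 2 = N := by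
  rintro ⟨x, y, h⟩
  have hsq : ((y.natAbs : ℤ)) ^ 2 = y ^ 2 := by simp [Int.natAbs_sq, sq_abs]
  exact sqrt79_descent N hN y.natAbs x (by rw [hsq]; exact h)

set_option maxHeartbeats 2000000 in
/-- In `F = ℚ(√79)` the prime ideals above `3` are non-principal; equivalently, there are
no integers `x, y` with `x² - 79y² = ±3`. -/
theorem primes_above_three_nonprincipal_sqrt79
    (F : Type*) [Field F] [NumberField F] (α : F) (hα : α ^ 2 = 79)
    (hdeg : Module.finrank ℚ F = 2) :
    (∀ P : Ideal (𝓞 F), P.IsPrime → (3 : 𝓞 F) ∈ P → ¬ P.IsPrincipal) ∧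
    (¬ ∃ x y : ℤ, x ^ 2 - 79 * y ^ 2 = 3) ∧
    (¬ ∃ x y : ℤ, x ^ 2 - 79 * y ^ 2 = -3) := by
  refine ⟨?_, no_int_sol_79 3 (Or.inl rfl), no_int_sol_79 (-3) (Or.inr rfl)⟩
  -- setup: 79 is not a rational square
  have h79 : ∀ r : ℚ, r ^ 2 ≠ 79 := by
    intro r hr
    have hirr : Irrational (Real.sqrt ((79:ℕ):ℝ)) :=
      (by norm_num : Nat.Prime 79).irrational_sqrt
    refine hirr ⟨|r|, ?_⟩
    have h1 : ((79:ℕ):ℝ) = ((r:ℝ))^2 := by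
      have : ((r:ℝ))^2 = ((79:ℚ):ℝ) := by exact_mod_cast congrArg (fun q : ℚ => (q:ℝ)) hr
      rw [this]; norm_num
    rw [h1, Real.sqrt_sq_eq_abs]
    push_cast
    rfl
  have hirrat : ∀ r : ℚ, algebraMap ℚ F r ≠ α := by
    intro r hr
    apply h79 r
    have : algebraMap ℚ F (r ^ 2) = algebraMap ℚ F 79 := by
      rw [map_pow, hr, hα]; simp
    exact (algebraMap ℚ F).injective this
  have hpair : ∀ s t : ℚ, s • (1 : F) + t • α = 0 → s = 0 ∧ t = 0 := by
    intro s t h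
    by_cases ht : t = 0
    · subst ht
      constructor
      · have : algebraMap ℚ F s = 0 := by
          rw [Algebra.smul_def] at h; simpa using h
        exact (_root_.map_eq_zero _).mp this
      · rfl
    · exfalso
      apply hirrat (-s/t)
      rw [Algebra.smul_def, Algebra.smul_def, mul_one] at h
      have h2 : algebraMap ℚ F t * α = algebraMap ℚ F (-s) := by
        rw [map_neg]; linear_combination h
      have hα' : α = algebraMap ℚ F (-s/t) := by
        calc α = algebraMap ℚ F (t⁻¹ * t) * α := by rw [inv_mul_cancel₀ ht]; simp
          _ = algebraMap ℚ F t⁻¹ * (algebraMap ℚ F t * α) := by rw [map_mul]; ring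
          _ = algebraMap ℚ F t⁻¹ * algebraMap ℚ F (-s) := by rw [h2]
          _ = algebraMap ℚ F (-s/t) := by rw [← map_mul]; congr 1; ring
      exact hα'.symm
  -- power basis
  have hli : LinearIndependent ℚ (fun i : Fin 2 => α ^ (i : ℕ)) := by
    have h2 : (fun i : Fin 2 => α ^ (i : ℕ)) = ![1, α] := by
      funext i; fin_cases i <;> simp
    rw [h2, LinearIndependent.pair_iff]
    exact hpair
  have hcard : Fintype.card (Fin 2) = Module.finrank ℚ F := by simp [hdeg]
  let B : Module.Basis (Fin 2) ℚ F := basisOfLinearIndependentOfCardEqFinrank hli hcard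
  let pb : PowerBasis ℚ F := ⟨α, 2, B, fun i => by
    simp [B, coe_basisOfLinearIndependentOfCardEqFinrank]⟩
  have hint : IsIntegral ℚ α := ⟨X ^ 2 - C 79, monic_X_pow_sub_C _ (by norm_num), by
    simp [hα]⟩
  have haev : (aeval α) (X ^ 2 - C (79:ℚ)) = 0 := by simp [hα]
  have hmp : minpoly ℚ α = X ^ 2 - C 79 := by
    have hdvd : minpoly ℚ α ∣ X ^ 2 - C 79 := minpoly.dvd ℚ α haev
    have hdeg2 : (minpoly ℚ α).natDegree = 2 := pb.natDegree_minpoly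
    have hmon : (minpoly ℚ α).Monic := minpoly.monic hint
    obtain ⟨c, hc⟩ := hdvd
    have hcm : c.Monic := hmon.of_mul_monic_left
      (by rw [← hc]; exact monic_X_pow_sub_C _ (by norm_num))
    have hcd : c.natDegree = 0 := by
      have hne : (minpoly ℚ α) ≠ 0 := hmon.ne_zero
      have := congrArg Polynomial.natDegree hc
      rw [Polynomial.natDegree_mul hne hcm.ne_zero] at this
      have hxd : (X ^ 2 - C (79:ℚ)).natDegree = 2 := by compute_degree!
      omega
    have : c = 1 := Polynomial.Monic.natDegree_eq_zero hcm |>.mp hcd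
    rw [hc, this, mul_one]
  have hmroot : (aeval (-α)) (minpoly ℚ α) = 0 := by rw [hmp]; simp [hα]
  let σ : F →ₐ[ℚ] F := pb.lift (-α) hmroot
  have hσα : σ α = -α := pb.lift_gen (-α) hmroot
  -- representation of elements
  have hrep : ∀ β : F, ∃ p q : ℚ, β = algebraMap ℚ F p + algebraMap ℚ F q * α := by
    intro β
    have hsp : Submodule.span ℚ {(1:F), α} = ⊤ := by
      have hBspan := B.span_eq
      rw [show Set.range B = {(1:F), α} from ?_] at hBspan
      · exact hBspan
      · rw [show ⇑B = fun i : Fin 2 => α ^ (i:ℕ) from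
          coe_basisOfLinearIndependentOfCardEqFinrank hli hcard]
        ext z
        constructor
        · rintro ⟨i, rfl⟩; fin_cases i <;> simp
        · rintro (rfl | rfl)
          · exact ⟨0, by simp⟩
          · exact ⟨1, by simp⟩
    have hβ : β ∈ Submodule.span ℚ {(1:F), α} := by rw [hsp]; trivial
    obtain ⟨p, q, hpq⟩ := Submodule.mem_span_pair.mp hβ
    exact ⟨p, q, by rw [← hpq, Algebra.smul_def, Algebra.smul_def, mul_one]⟩
  -- coordinates of integral elements
  have hcoords : ∀ b : F, IsIntegral ℤ b → ∀ p q : ℚ,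
      b = algebraMap ℚ F p + algebraMap ℚ F q * α →
      ∃ t s n : ℤ, (t:ℚ) = 2*p ∧ (s:ℚ) = 2*q ∧ t^2 - 79*s^2 = 4*n ∧
        b * σ b = algebraMap ℚ F ((n:ℤ):ℚ) := by
    intro b hbint p q hbpq
    have hσb : σ b = algebraMap ℚ F p - algebraMap ℚ F q * α := by
      rw [hbpq, map_add, map_mul, AlgHom.commutes, AlgHom.commutes, hσα]; ring
    have hσbint : IsIntegral ℤ (σ b) := hbint.map σ
    -- trace
    have htr : b + σ b = algebraMap ℚ F (2*p) := by
      rw [hσb, hbpq, map_mul, map_ofNat]; ring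
    have htri : IsIntegral ℤ ((2*p : ℚ)) := by
      rw [← isIntegral_algebraMap_iff (B := F) (algebraMap ℚ F).injective, ← htr]
      exact hbint.add hσbint
    obtain ⟨t, ht0⟩ := IsIntegrallyClosed.isIntegral_iff.mp htri
    have ht : (t:ℚ) = 2*p := by rw [← ht0]; simp
    -- norm
    have hnm : b * σ b = algebraMap ℚ F (p^2 - 79*q^2) := by
      rw [hσb, hbpq]
      have hmapeq : algebraMap ℚ F (p^2 - 79*q^2)
          = (algebraMap ℚ F p)^2 - 79 * (algebraMap ℚ F q)^2 := by
        rw [map_sub, map_pow, map_mul, map_pow, map_ofNat]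
      rw [hmapeq]
      linear_combination (-(algebraMap ℚ F q)^2) * hα
    have hnmi : IsIntegral ℤ ((p^2 - 79*q^2 : ℚ)) := by
      rw [← isIntegral_algebraMap_iff (B := F) (algebraMap ℚ F).injective, ← hnm]
      exact hbint.mul hσbint
    obtain ⟨n, hn0⟩ := IsIntegrallyClosed.isIntegral_iff.mp hnmi
    have hn : (n:ℚ) = p^2 - 79*q^2 := by rw [← hn0]; simp
    -- second coordinate
    set u : ℚ := 79*(2*q) with hu
    have hu2 : u^2 = ((79*(t^2 - 4*n) : ℤ) : ℚ) := by
      push_cast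
      rw [hu]
      linear_combination (-79*((t:ℚ) + 2*p)) * ht + 316 * hn
    have hui : IsIntegral ℤ u :=
      ⟨X^2 - C (79*(t^2-4*n)), monic_X_pow_sub_C _ (by norm_num), by
        show (aeval u) ((X:ℤ[X])^2 - C (79*(t^2-4*n))) = 0
        have heval : (aeval u) ((X:ℤ[X])^2 - C (79*(t^2-4*n)))
            = u^2 - ((79*(t^2-4*n):ℤ):ℚ) := by
          rw [map_sub, map_pow, aeval_X, aeval_C, eq_intCast]
        rw [heval, hu2, sub_self]⟩
    obtain ⟨U, hU0⟩ := IsIntegrallyClosed.isIntegral_iff.mp hui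
    have hU : (U:ℚ) = u := by rw [← hU0]; simp
    have hU2 : U^2 = 79*(t^2-4*n) := by
      have : ((U:ℚ))^2 = ((79*(t^2-4*n) : ℤ):ℚ) := by rw [hU, hu2]
      exact_mod_cast this
    have h79U : (79:ℤ) ∣ U := by
      have hp79 : Nat.Prime 79 := by norm_num
      exact Int.Prime.dvd_pow' (n := U) (k := 2) hp79 ⟨t^2-4*n, hU2⟩
    obtain ⟨s, rfl⟩ := h79U
    have hs : (s:ℚ) = 2*q := by
      have h1 : ((79*s : ℤ):ℚ) = 79*(2*q) := by rw [hU, hu]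
      push_cast at h1
      linarith
    have hts : t^2 - 79*s^2 = 4*n := by
      have h1 : (79:ℤ)*(79*s^2) = 79*(t^2-4*n) := by linear_combination hU2
      have h2 : (79:ℤ)*s^2 = t^2-4*n := by
        have := mul_left_cancel₀ (show (79:ℤ) ≠ 0 by norm_num) h1
        exact this
      linarith
    exact ⟨t, s, n, ht, hs, hts, by rw [hnm, hn]⟩
  -- the main argument
  intro P hP h3P hprinc
  obtain ⟨β, hβspan⟩ := hprinc.principal
  rw [hβspan] at h3P
  obtain ⟨γ, hγ⟩ := Ideal.mem_span_singleton.mp h3P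
  have hbint : IsIntegral ℤ (algebraMap (𝓞 F) F β) := RingOfIntegers.isIntegral_coe β
  have hgint : IsIntegral ℤ (algebraMap (𝓞 F) F γ) := RingOfIntegers.isIntegral_coe γ
  obtain ⟨p, q, hbpq⟩ := hrep (algebraMap (𝓞 F) F β)
  obtain ⟨p', q', hgpq⟩ := hrep (algebraMap (𝓞 F) F γ)
  obtain ⟨t, s, n, ht, hs, hts, hbnm⟩ := hcoords _ hbint p q hbpq
  obtain ⟨t', s', n', ht', hs', hts', hgnm⟩ := hcoords _ hgint p' q' hgpq
  have hbg : (algebraMap (𝓞 F) F β) * (algebraMap (𝓞 F) F γ) = 3 := by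
    rw [← map_mul, ← hγ, map_ofNat]
  have hσ3 : σ (3:F) = 3 := map_ofNat σ 3
  have h9 : algebraMap ℚ F (((n * n' : ℤ)):ℚ) = algebraMap ℚ F ((9:ℤ):ℚ) := by
    rw [show ((n*n':ℤ):ℚ) = ((n:ℤ):ℚ)*((n':ℤ):ℚ) by push_cast; ring, map_mul,
      ← hbnm, ← hgnm]
    have hmix : (algebraMap (𝓞 F) F β) * σ (algebraMap (𝓞 F) F β) *
        ((algebraMap (𝓞 F) F γ) * σ (algebraMap (𝓞 F) F γ))
        = ((algebraMap (𝓞 F) F β) * (algebraMap (𝓞 F) F γ)) *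
          σ ((algebraMap (𝓞 F) F β) * (algebraMap (𝓞 F) F γ)) := by
      rw [map_mul]; ring
    rw [hmix, hbg, hσ3]
    norm_num
  have hnn' : n * n' = 9 := by
    have h1 : ((n * n' : ℤ):ℚ) = ((9:ℤ):ℚ) := (algebraMap ℚ F).injective h9
    exact_mod_cast h1
  -- β is not a unit
  have hβnotunit : ¬ IsUnit β := by
    intro hu
    exact hP.ne_top (hβspan ▸ Ideal.span_singleton_eq_top.mpr hu)
  -- n ≠ ±1
  have hn1 : n ≠ 1 ∧ n ≠ -1 := by
    constructor <;> intro hne <;> apply hβnotunit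
    · have hinv : IsIntegral ℤ (σ (algebraMap (𝓞 F) F β)) := hbint.map σ
      refine IsUnit.of_mul_eq_one (a := β) ⟨σ (algebraMap (𝓞 F) F β), hinv⟩ ?_
      apply RingOfIntegers.coe_injective
      have : algebraMap (𝓞 F) F (β * ⟨σ (algebraMap (𝓞 F) F β), hinv⟩)
          = algebraMap (𝓞 F) F β * σ (algebraMap (𝓞 F) F β) := by
        exact map_mul _ _ _
      rw [this, hbnm, hne, map_one]
      norm_num
    · have hinv : IsIntegral ℤ (-σ (algebraMap (𝓞 F) F β)) := (hbint.map σ).neg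
      refine IsUnit.of_mul_eq_one (a := β) ⟨-σ (algebraMap (𝓞 F) F β), hinv⟩ ?_
      apply RingOfIntegers.coe_injective
      have : algebraMap (𝓞 F) F (β * ⟨-σ (algebraMap (𝓞 F) F β), hinv⟩)
          = algebraMap (𝓞 F) F β * (-σ (algebraMap (𝓞 F) F β)) := by
        exact map_mul _ _ _
      rw [this, map_one]
      have : algebraMap (𝓞 F) F β * -σ (algebraMap (𝓞 F) F β)
          = -(algebraMap (𝓞 F) F β * σ (algebraMap (𝓞 F) F β)) := by ring
      rw [this, hbnm, hne]
      norm_num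
  -- n ≠ ±3 : parity descent
  have hsq_aux : ∀ m : ℤ, m = 3 ∨ m = -3 → t^2 - 79*s^2 = 4*m → False := by
    intro m hm htm
    rcases Int.even_or_odd t with ⟨a, rfl⟩ | ⟨a, rfl⟩
    · rcases Int.even_or_odd s with ⟨c, rfl⟩ | ⟨c, rfl⟩
      · -- both even : integer solution of x² - 79 y² = ±3
        refine no_int_sol_79 m hm ⟨a, c, ?_⟩
        have h4 : 4*(a^2 - 79*c^2) = 4*m := by linear_combination htm
        linarith [h4]
      · obtain ⟨K, hK⟩ : ∃ K:ℤ, 4*K - 79 = 4*m :=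
          ⟨a*a - 79*(c^2+c), by linear_combination htm⟩
        rcases hm with rfl | rfl <;> omega
    · rcases Int.even_or_odd s with ⟨c, rfl⟩ | ⟨c, rfl⟩
      · obtain ⟨K, hK⟩ : ∃ K:ℤ, 4*K + 1 = 4*m :=
          ⟨a^2 + a - 79*(c*c), by linear_combination htm⟩
        rcases hm with rfl | rfl <;> omega
      · obtain ⟨K, hK⟩ : ∃ K:ℤ, 4*K - 78 = 4*m :=
          ⟨a^2 + a - 79*(c^2+c), by linear_combination htm⟩
        rcases hm with rfl | rfl <;> omega
  have hn3 : n ≠ 3 ∧ n ≠ -3 := by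
    constructor <;> intro hne <;> subst hne
    · exact hsq_aux 3 (Or.inl rfl) hts
    · exact hsq_aux (-3) (Or.inr rfl) hts
  -- so |n| = 9 and γ is a unit
  have hdvd9 : n ∣ 9 := ⟨n', hnn'.symm⟩
  have hna : n.natAbs ∣ 9 := by
    have h1 := Int.natAbs_dvd_natAbs.mpr hdvd9
    simpa using h1
  have hn9 : n = 9 ∨ n = -9 := by
    have hle : n.natAbs ≤ 9 := Nat.le_of_dvd (by norm_num) hna
    interval_cases h : n.natAbs <;> omega
  have hn'1 : n' = 1 ∨ n' = -1 := by rcases hn9 with rfl | rfl <;> omega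
  have hγunit : IsUnit γ := by
    rcases hn'1 with hne | hne
    · have hinv : IsIntegral ℤ (σ (algebraMap (𝓞 F) F γ)) := hgint.map σ
      refine IsUnit.of_mul_eq_one (a := γ) ⟨σ (algebraMap (𝓞 F) F γ), hinv⟩ ?_
      apply RingOfIntegers.coe_injective
      have : algebraMap (𝓞 F) F (γ * ⟨σ (algebraMap (𝓞 F) F γ), hinv⟩)
          = algebraMap (𝓞 F) F γ * σ (algebraMap (𝓞 F) F γ) := by
        exact map_mul _ _ _
      rw [this, hgnm, hne, map_one]
      norm_num
    · have hinv : IsIntegral ℤ (-σ (algebraMap (𝓞 F) F γ)) := (hgint.map σ).neg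
      refine IsUnit.of_mul_eq_one (a := γ) ⟨-σ (algebraMap (𝓞 F) F γ), hinv⟩ ?_
      apply RingOfIntegers.coe_injective
      have h1 : algebraMap (𝓞 F) F (γ * ⟨-σ (algebraMap (𝓞 F) F γ), hinv⟩)
          = algebraMap (𝓞 F) F γ * (-σ (algebraMap (𝓞 F) F γ)) := by
        exact map_mul _ _ _
      rw [h1, map_one]
      have h2 : algebraMap (𝓞 F) F γ * -σ (algebraMap (𝓞 F) F γ)
          = -(algebraMap (𝓞 F) F γ * σ (algebraMap (𝓞 F) F γ)) := by ring
      rw [h2, hgnm, hne]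
      norm_num
  -- hence P = (3)
  obtain ⟨v, hv⟩ := hγunit
  have hassoc : Associated β (3 : 𝓞 F) := ⟨v, by rw [hv, ← hγ]⟩
  have hspan3 : P = Ideal.span {(3 : 𝓞 F)} := by
    rw [hβspan]
    exact Ideal.span_singleton_eq_span_singleton.mpr hassoc
  -- but (3) is not prime: (α+1)(α-1) = 78 ∈ (3), yet 3 ∤ α ± 1
  have hαint : IsIntegral ℤ α := by
    refine ⟨X^2 - C (79:ℤ), monic_X_pow_sub_C _ (by norm_num), ?_⟩
    show (aeval α) ((X:ℤ[X])^2 - C (79:ℤ)) = 0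
    rw [map_sub, map_pow, aeval_X, aeval_C, hα, map_ofNat, sub_self]
  set A : 𝓞 F := ⟨α, hαint⟩ with hA
  have hAcoe : algebraMap (𝓞 F) F A = α := rfl
  have hprod : (A + 1) * (A - 1) ∈ P := by
    rw [hspan3, Ideal.mem_span_singleton]
    refine ⟨26, ?_⟩
    apply RingOfIntegers.coe_injective
    rw [map_mul, map_mul, map_add, map_sub, map_one, hAcoe, map_ofNat, map_ofNat]
    linear_combination hα
  have hfinal : ∀ e : ℚ, (e = 1 ∨ e = -1) → (∀ d : 𝓞 F,
      algebraMap (𝓞 F) F A + algebraMap ℚ F e = 3 * algebraMap (𝓞 F) F d → False) := by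
    intro e he d hd
    obtain ⟨pd, qd, hdpq⟩ := hrep (algebraMap (𝓞 F) F d)
    obtain ⟨td, sd, nd, htd, hsd, _, _⟩ :=
      hcoords _ (RingOfIntegers.isIntegral_coe d) pd qd hdpq
    have hcomb : (3*pd - e) • (1:F) + (3*qd - 1) • α = 0 := by
      rw [Algebra.smul_def, Algebra.smul_def, mul_one, map_sub, map_sub, map_mul,
        map_mul, map_ofNat, map_one]
      rw [hdpq] at hd
      rw [hAcoe] at hd
      linear_combination -hd
    have hq3 : 3*qd - 1 = 0 := (hpair _ _ hcomb).2
    have hcontra : (3*(sd:ℚ)) = 2 := by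
      rw [hsd]
      linarith
    have : (3*sd : ℤ) = 2 := by exact_mod_cast hcontra
    omega
  rcases hP.mem_or_mem hprod with hm | hm <;>
    rw [hspan3, Ideal.mem_span_singleton] at hm <;> obtain ⟨d, hd⟩ := hm
  · refine hfinal 1 (Or.inl rfl) d ?_
    have := congrArg (algebraMap (𝓞 F) F) hd
    rw [map_mul, map_add, map_one, map_ofNat, hAcoe] at this
    rw [map_one]
    exact this
  · refine hfinal (-1) (Or.inr rfl) d ?_
    have := congrArg (algebraMap (𝓞 F) F) hd
    rw [map_mul, map_sub, map_one, map_ofNat, hAcoe] at this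
    rw [map_neg, map_one, hAcoe]
    linear_combination this
end

section
/- There are no integers x, y with x² − 257 y² = ±2. Consequently, the prime ideals of ℚ(√257) lying above 2 are non-principal. -/
open NumberField Polynomial

lemma no_rat_sq257 (q : ℚ) : q ^ 2 ≠ 257 := by
  intro h
  have h257 : Nat.Prime 257 := by norm_num
  apply h257.irrational_sqrt
  refine ⟨|q|, ?_⟩
  have hq : ((q : ℝ)) ^ 2 = 257 := by exact_mod_cast h
  rw [show ((257:ℕ):ℝ) = ((q:ℝ))^2 by rw [hq]; norm_num, Real.sqrt_sq_eq_abs]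
  push_cast
  ring

section
variable {F : Type*} [Field F] [CharZero F] {α : F}

lemma coords_unique (hα : α ^ 2 = 257) {a b c d : ℚ}
    (h : algebraMap ℚ F a + algebraMap ℚ F b * α = algebraMap ℚ F c + algebraMap ℚ F d * α) :
    a = c ∧ b = d := by
  have hinj : Function.Injective (algebraMap ℚ F) := (algebraMap ℚ F).injective
  by_cases hbd : b = d
  · subst hbd
    refine ⟨hinj ?_, rfl⟩
    have := add_right_cancel h
    exact this
  · exfalso
    have hb : algebraMap ℚ F (b - d) * α = algebraMap ℚ F (c - a) := by
      rw [map_sub, map_sub]; linear_combination h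
    have hbd' : algebraMap ℚ F (b - d) ≠ 0 :=
      (map_ne_zero (algebraMap ℚ F)).mpr (sub_ne_zero.mpr hbd)
    have hαeq : α = algebraMap ℚ F ((c - a) / (b - d)) := by
      rw [map_div₀, eq_div_iff hbd']
      linear_combination hb
    apply no_rat_sq257 ((c - a) / (b - d))
    have : algebraMap ℚ F (((c - a) / (b - d)) ^ 2) = algebraMap ℚ F 257 := by
      rw [map_pow, ← hαeq, hα]
      norm_num
    exact hinj this

end

section
variable {F : Type*} [Field F] [CharZero F] {α : F}

lemma coords_exist (hα : α ^ 2 = 257) (hdeg : Module.finrank ℚ F = 2) (β : F) :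
    ∃ a b : ℚ, β = algebraMap ℚ F a + algebraMap ℚ F b * α := by
  have hli : LinearIndependent ℚ ![α, (1 : F)] := by
    rw [LinearIndependent.pair_iff]
    intro s t hst
    rw [Algebra.smul_def, Algebra.smul_def, mul_one] at hst
    have h0 : algebraMap ℚ F t + algebraMap ℚ F s * α
        = algebraMap ℚ F 0 + algebraMap ℚ F 0 * α := by
      rw [map_zero]; linear_combination hst
    obtain ⟨ht, hs⟩ := coords_unique hα h0
    exact ⟨hs, ht⟩
  let B := basisOfLinearIndependentOfCardEqFinrank hli (by simp [hdeg])
  have hB : ∀ i, B i = ![α, (1:F)] i := fun i => by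
    simp [B, coe_basisOfLinearIndependentOfCardEqFinrank]
  refine ⟨B.repr β 1, B.repr β 0, ?_⟩
  have := B.sum_repr β
  rw [Fin.sum_univ_two, hB 0, hB 1] at this
  simp only [Matrix.cons_val_zero, Matrix.cons_val_one, Matrix.head_cons] at this
  rw [Algebra.smul_def, Algebra.smul_def, mul_one] at this
  linear_combination -this

end

section
variable {F : Type*} [Field F] [NumberField F] {α : F}

lemma coords_int (hα : α ^ 2 = 257) (β : 𝓞 F) {a b : ℚ}
    (hβ : (β : F) = algebraMap ℚ F a + algebraMap ℚ F b * α) :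
    ∃ t n : ℤ, (t : ℚ) = 2 * a ∧ (n : ℚ) = a ^ 2 - 257 * b ^ 2 := by
  have hint : IsIntegral ℤ (β : F) := RingOfIntegers.isIntegral_coe β
  by_cases hb : b = 0
  · subst hb
    rw [map_zero, zero_mul, add_zero] at hβ
    have ha : IsIntegral ℤ a := by
      have := (isIntegral_algHom_iff ((Algebra.ofId ℚ F).restrictScalars ℤ)
        (algebraMap ℚ F).injective (x := a)).mp (by rw [show ((Algebra.ofId ℚ F).restrictScalars ℤ) a = algebraMap ℚ F a from rfl, ← hβ]; exact hint)
      exact this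
    obtain ⟨k, hk⟩ := IsIntegrallyClosed.isIntegral_iff.mp ha
    rw [eq_intCast] at hk
    exact ⟨2 * k, k ^ 2, by push_cast [← hk]; constructor <;> ring⟩
  · set p : ℚ[X] := X ^ 2 - C (2 * a) * X + C (a ^ 2 - 257 * b ^ 2) with hp
    have hpm : p.Monic := by rw [hp]; monicity!
    have hpdeg : p.natDegree = 2 := by rw [hp]; compute_degree!
    have haev : aeval (β : F) p = 0 := by
      rw [hp]
      simp only [map_add, map_sub, map_pow, map_mul, map_ofNat, aeval_X, aeval_C]
      rw [hβ]
      linear_combination (algebraMap ℚ F b) ^ 2 * hα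
    have hmin : minpoly ℚ (β : F) = p := by
      have hdvd := minpoly.dvd ℚ (β : F) haev
      have hq2 : 2 ≤ (minpoly ℚ (β : F)).natDegree := by
        refine (minpoly.two_le_natDegree_iff (IsIntegral.of_finite ℚ _)).mpr ?_
        rintro ⟨c, hc⟩
        have h0 : algebraMap ℚ F c + algebraMap ℚ F 0 * α
            = algebraMap ℚ F a + algebraMap ℚ F b * α := by
          rw [map_zero, zero_mul, add_zero, hc, hβ]
        exact hb ((coords_unique hα h0).2.symm)
      obtain ⟨q, hq⟩ := hdvd
      have hmne : minpoly ℚ (β : F) ≠ 0 := minpoly.ne_zero (IsIntegral.of_finite ℚ _)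
      have hqne : q ≠ 0 := by
        rintro rfl
        rw [mul_zero] at hq
        exact hpm.ne_zero hq
      have hdegq : q.natDegree = 0 := by
        have := Polynomial.natDegree_mul hmne hqne
        rw [← hq, hpdeg] at this
        omega
      obtain ⟨c, hc⟩ := Polynomial.natDegree_eq_zero.mp hdegq
      have hmonic : (minpoly ℚ (β : F)).Monic := minpoly.monic (IsIntegral.of_finite ℚ _)
      have hc1 : c = 1 := by
        have := congrArg Polynomial.leadingCoeff hq
        rw [Polynomial.leadingCoeff_mul, hmonic.leadingCoeff, hpm.leadingCoeff, ← hc,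
          Polynomial.leadingCoeff_C, one_mul] at this
        exact this.symm
      rw [hq, ← hc, hc1, map_one, mul_one]
    have hmap : p = (minpoly ℤ β).map (algebraMap ℤ ℚ) := by
      rw [← hmin]
      exact minpoly.isIntegrallyClosed_eq_field_fractions ℚ F (Algebra.IsIntegral.isIntegral β)
    have e1 : p.coeff 1 = -(2 * a) := by
      rw [hp]
      simp only [Polynomial.coeff_add, Polynomial.coeff_sub, Polynomial.coeff_C_mul,
        Polynomial.coeff_X_pow, Polynomial.coeff_X_one, Polynomial.coeff_C]
      norm_num
    have e0 : p.coeff 0 = a ^ 2 - 257 * b ^ 2 := by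
      rw [hp]
      simp only [Polynomial.coeff_add, Polynomial.coeff_sub, Polynomial.coeff_C_mul,
        Polynomial.coeff_X_pow, Polynomial.coeff_X_zero, Polynomial.coeff_C]
      norm_num
    have c1 : (((minpoly ℤ β).coeff 1 : ℤ) : ℚ) = -(2 * a) := by
      rw [← e1, hmap, Polynomial.coeff_map, eq_intCast]
    have c0 : (((minpoly ℤ β).coeff 0 : ℤ) : ℚ) = a ^ 2 - 257 * b ^ 2 := by
      rw [← e0, hmap, Polynomial.coeff_map, eq_intCast]
    refine ⟨-(minpoly ℤ β).coeff 1, (minpoly ℤ β).coeff 0, ?_, c0⟩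
    push_cast
    rw [c1]
    ring

end


lemma descent257 (c : ℤ) (hc : c = 2 ∨ c = -2 ∨ c = 8 ∨ c = -8) :
    ∀ y : ℕ, ∀ x : ℤ, x ^ 2 - 257 * (y : ℤ) ^ 2 ≠ c := by
  intro y
  induction y using Nat.strong_induction_on generalizing c with
  | _ y ih =>
    intro x hx
    have hcb : -8 ≤ c ∧ c ≤ 8 ∧ c ≠ 0 := by omega
    obtain ⟨X, hX⟩ : ∃ X : ℕ, x ^ 2 = (X : ℤ) ^ 2 := ⟨x.natAbs, (Int.natAbs_sq x).symm⟩
    rw [hX] at hx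
    rcases le_or_gt y 2 with hy | hy
    · have hXle : X ≤ 32 := by nlinarith [sq_nonneg ((X : ℤ))]
      interval_cases y <;> interval_cases X <;> omega
    · have hy3 : (3 : ℤ) ≤ (y : ℤ) := by exact_mod_cast hy
      have h1 : 16 * (y : ℤ) < (X : ℤ) := by nlinarith [sq_nonneg ((X:ℤ) - 16 * y), sq_nonneg ((X:ℤ) + 16 * y)]
      have h2 : (X : ℤ) < 17 * y := by nlinarith
      set y' : ℤ := (X : ℤ) - 16 * y with hy'
      have hy'pos : 0 < y' := by omega
      have hy'lt : y' < y := by omega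
      have hnew : (257 * (y:ℤ) - 16 * X) ^ 2 - 257 * y' ^ 2 = -c := by
        rw [hy']; linear_combination -hx
      have := ih y'.toNat (by omega) (-c) (by omega) (257 * (y:ℤ) - 16 * X)
      rw [show ((y'.toNat : ℤ)) = y' by omega] at this
      exact this hnew

/-- There are no integers `x, y` with `x² - 257y² = ±2`; consequently the prime ideals of
`ℚ(√257)` lying above `2` are non-principal (using also the half-integer variant
`x² - 257y² = ±8` with `x ≡ y (mod 2)`). -/
theorem primes_above_two_nonprincipal_sqrt257
    (F : Type*) [Field F] [NumberField F] (α : F) (hα : α ^ 2 = 257)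
    (hdeg : Module.finrank ℚ F = 2) :
    (¬ ∃ x y : ℤ, x ^ 2 - 257 * y ^ 2 = 2) ∧
    (¬ ∃ x y : ℤ, x ^ 2 - 257 * y ^ 2 = -2) ∧
    (∀ P : Ideal (𝓞 F), P.IsPrime → (2 : 𝓞 F) ∈ P → ¬ P.IsPrincipal) := by
  refine ⟨?_, ?_, ?_⟩
  · rintro ⟨x, y, h⟩
    apply descent257 2 (by norm_num) y.natAbs x
    rw [Int.natAbs_sq]; exact h
  · rintro ⟨x, y, h⟩
    apply descent257 (-2) (by norm_num) y.natAbs x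
    rw [Int.natAbs_sq]; exact h
  intro P hP h2P hprin
  obtain ⟨β, hβgen⟩ := hprin.principal
  have coords : ∀ δ : 𝓞 F, ∃ (a b : ℚ) (t n : ℤ),
      (δ : F) = algebraMap ℚ F a + algebraMap ℚ F b * α ∧
      (t : ℚ) = 2 * a ∧ (n : ℚ) = a ^ 2 - 257 * b ^ 2 := by
    intro δ
    obtain ⟨a, b, hab⟩ := coords_exist hα hdeg (δ : F)
    obtain ⟨t, n, ht, hn⟩ := coords_int hα δ hab
    exact ⟨a, b, t, n, hab, ht, hn⟩
  have hαint : IsIntegral ℤ α := by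
    refine ⟨Polynomial.X ^ 2 - Polynomial.C (257 : ℤ), Polynomial.monic_X_pow_sub_C _ two_ne_zero, ?_⟩
    simp [hα]
  have hcast : ∀ (t : ℤ) (s : ℚ), (t : ℚ) = s → ((t : ℤ) : F) = algebraMap ℚ F s := by
    intro t s hts
    rw [← hts, map_intCast]
  have halfint : ∀ (δ : 𝓞 F) (a b : ℚ) (t n : ℤ),
      (δ : F) = algebraMap ℚ F a + algebraMap ℚ F b * α → (t : ℚ) = 2 * a →
      (n : ℚ) = a ^ 2 - 257 * b ^ 2 → ∃ y : ℤ, (y : ℚ) = 2 * b := by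
    intro δ a b t n hδ ht hn
    set ρ : 𝓞 F := (2 * δ - (t : 𝓞 F)) * ⟨α, hαint⟩ with hρ
    have hρF : (ρ : F) = algebraMap ℚ F (514 * b) := by
      rw [hρ]
      show ((2 * δ - (t : 𝓞 F) : 𝓞 F) : F) * α = _
      simp only [map_mul, map_sub, map_add, map_pow, map_intCast, map_ofNat, map_one, map_div₀,
        NumberField.RingOfIntegers.map_mk, ← NumberField.RingOfIntegers.coe_eq_algebraMap,
        NumberField.RingOfIntegers.coe_mk]
      rw [hδ, hcast t _ ht]
      simp only [map_mul, map_sub, map_add, map_pow, map_ofNat, map_one]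
      linear_combination (2 * algebraMap ℚ F b) * hα
    have hbint : IsIntegral ℤ ((514 : ℚ) * b) := by
      have := (isIntegral_algHom_iff ((Algebra.ofId ℚ F).restrictScalars ℤ)
        (algebraMap ℚ F).injective (x := 514 * b)).mp
        (by rw [show ((Algebra.ofId ℚ F).restrictScalars ℤ) (514 * b) = algebraMap ℚ F (514 * b) from rfl,
          ← hρF]; exact NumberField.RingOfIntegers.isIntegral_coe ρ)
      exact this
    obtain ⟨m, hm⟩ := IsIntegrallyClosed.isIntegral_iff.mp hbint
    rw [eq_intCast] at hm
    have hm2 : m ^ 2 = 257 * (t ^ 2 - 4 * n) := by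
      have : ((m : ℚ)) ^ 2 = 257 * ((t : ℚ) ^ 2 - 4 * (n : ℚ)) := by
        rw [hm, ht, hn]; ring
      exact_mod_cast this
    have hdvd : (257 : ℤ) ∣ m := by
      have hpr : Prime (257 : ℤ) := by norm_num
      exact hpr.dvd_of_dvd_pow (n := 2) ⟨t ^ 2 - 4 * n, hm2⟩
    obtain ⟨y, hy⟩ := hdvd
    refine ⟨y, ?_⟩
    have h514 : ((257 : ℚ)) * y = 514 * b := by rw [← hm, hy]; push_cast; ring
    linarith
  have conjprod : ∀ (δ : 𝓞 F) (a b : ℚ) (t n : ℤ),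
      (δ : F) = algebraMap ℚ F a + algebraMap ℚ F b * α → (t : ℚ) = 2 * a →
      (n : ℚ) = a ^ 2 - 257 * b ^ 2 → δ * ((t : 𝓞 F) - δ) = (n : 𝓞 F) := by
    intro δ a b t n hδ ht hn
    apply NumberField.RingOfIntegers.ext
    simp only [map_mul, map_sub, map_add, map_pow, map_intCast, map_ofNat, map_one, map_div₀,
      ← NumberField.RingOfIntegers.coe_eq_algebraMap]
    rw [hδ, hcast t _ ht, hcast n _ hn]
    simp only [map_mul, map_sub, map_add, map_pow, map_ofNat, map_one]
    linear_combination (-(algebraMap ℚ F b) ^ 2) * hα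
  have unitof : ∀ (δ : 𝓞 F) (a b : ℚ) (t n : ℤ),
      (δ : F) = algebraMap ℚ F a + algebraMap ℚ F b * α → (t : ℚ) = 2 * a →
      (n : ℚ) = a ^ 2 - 257 * b ^ 2 → (n = 1 ∨ n = -1) → IsUnit δ := by
    intro δ a b t n hδ ht hn hcase
    have hcp := conjprod δ a b t n hδ ht hn
    rcases hcase with rfl | rfl
    · exact IsUnit.of_mul_eq_one _ (by rw [hcp]; norm_num)
    · exact IsUnit.of_mul_eq_one (-((t : 𝓞 F) - δ)) (by rw [mul_neg, hcp]; norm_num)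
  obtain ⟨γ, hγβ⟩ := Ideal.mem_span_singleton'.mp (hβgen ▸ h2P)
  obtain ⟨a, b, t1, n1, hβc, ht1, hn1⟩ := coords β
  obtain ⟨c, d, t2, n2, hγc, ht2, hn2⟩ := coords γ
  have hE : algebraMap ℚ F (c * a + 257 * (d * b)) + algebraMap ℚ F (c * b + d * a) * α
      = algebraMap ℚ F 2 + algebraMap ℚ F 0 * α := by
    have h2F : (γ : F) * (β : F) = 2 := by
      have := congrArg (algebraMap (𝓞 F) F) hγβ
      simpa only [map_mul, map_ofNat, ← NumberField.RingOfIntegers.coe_eq_algebraMap] using this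
    rw [hγc, hβc] at h2F
    simp only [map_mul, map_sub, map_add, map_pow, map_ofNat, map_one, map_zero]
    linear_combination (-(algebraMap ℚ F d * algebraMap ℚ F b)) * hα + h2F
  obtain ⟨hE1, hE2⟩ := coords_unique hα hE
  have hn12 : n1 * n2 = (4 : ℤ) := by
    have h4 : ((n1 : ℚ)) * (n2 : ℚ) = 4 := by
      rw [hn1, hn2]
      linear_combination (c * a + 257 * (d * b) + 2) * hE1 - 257 * (c * b + d * a) * hE2
    exact_mod_cast h4
  have hn1cases : n1 = 1 ∨ n1 = -1 ∨ n1 = 2 ∨ n1 = -2 ∨ n1 = 4 ∨ n1 = -4 := by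
    have hd4 : n1 ∣ 4 := ⟨n2, hn12.symm⟩
    have hub : n1 ≤ 4 := Int.le_of_dvd (by norm_num) hd4
    have hlb : -4 ≤ n1 := by
      have : -n1 ≤ 4 := Int.le_of_dvd (by norm_num) ((neg_dvd).mpr hd4)
      omega
    interval_cases n1 <;> omega
  have dio : ∀ s : ℤ, (s = 8 ∨ s = -8) → (4 * n1 : ℤ) = s → False := by
    intro s hs h4n
    obtain ⟨y, hy⟩ := halfint β a b t1 n1 hβc ht1 hn1
    apply descent257 s (by omega) y.natAbs t1
    rw [Int.natAbs_sq]
    have hq : ((t1 : ℚ)) ^ 2 - 257 * (y : ℚ) ^ 2 = ((s : ℤ) : ℚ) := by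
      rw [ht1, hy]
      have hsq : ((4 * n1 : ℤ) : ℚ) = ((s : ℤ) : ℚ) := by exact_mod_cast h4n
      push_cast at hsq
      push_cast
      rw [← hsq, hn1]
      ring
    exact_mod_cast hq
  have unitcase : (n1 = 1 ∨ n1 = -1) → False := by
    intro hcase
    have hu := unitof β a b t1 n1 hβc ht1 hn1 hcase
    exact hP.ne_top (hβgen.trans (Ideal.span_singleton_eq_top.mpr hu))
  rcases hn1cases with hc1 | hc1 | hc1 | hc1 | hc1 | hc1
  · exact unitcase (Or.inl hc1)
  · exact unitcase (Or.inr hc1)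
  · exact dio 8 (Or.inl rfl) (by omega)
  · exact dio (-8) (Or.inr rfl) (by omega)
  all_goals {
    rw [hc1] at hn12
    have hn2val : n2 = 1 ∨ n2 = -1 := by omega
    have hγu : IsUnit γ := unitof γ c d t2 n2 hγc ht2 hn2 hn2val
    have hassoc : Associated β (2 : 𝓞 F) := ⟨hγu.unit, by rw [IsUnit.unit_spec, mul_comm]; exact hγβ⟩
    have hspan2 : P = Ideal.span {(2 : 𝓞 F)} :=
      hβgen.trans (Ideal.span_singleton_eq_span_singleton.mpr hassoc)
    have hωint : IsIntegral ℤ (algebraMap ℚ F (1/2) + algebraMap ℚ F (1/2) * α) := by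
      refine ⟨Polynomial.X ^ 2 - Polynomial.X - Polynomial.C (64 : ℤ), by monicity!, ?_⟩
      simp only [Polynomial.eval₂_sub, Polynomial.eval₂_pow, Polynomial.eval₂_X,
        Polynomial.eval₂_C, Polynomial.eval₂_ofNat, map_ofNat, map_mul, map_add, map_one, map_div₀]
      linear_combination ((1 / 4 : F)) * hα
    set ω : 𝓞 F := ⟨algebraMap ℚ F (1/2) + algebraMap ℚ F (1/2) * α, hωint⟩ with hω
    have hω64 : ω * (ω - 1) = (64 : 𝓞 F) := by
      apply NumberField.RingOfIntegers.ext
      simp only [map_mul, map_sub, map_one, map_ofNat]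
      rw [hω]
      simp only [map_mul, map_sub, map_add, map_pow, map_intCast, map_ofNat, map_one, map_div₀,
        NumberField.RingOfIntegers.map_mk]
      linear_combination ((1 / 4 : F)) * hα
    have h64P : ω * (ω - 1) ∈ P := by
      rw [hω64, show ((64 : 𝓞 F)) = 2 * 32 by norm_num]
      exact Ideal.mul_mem_right 32 P h2P
    have oddcase : ∀ ξ : 𝓞 F, ξ ∈ P →
        ∀ u v : ℚ, (ξ : F) = algebraMap ℚ F u + algebraMap ℚ F v * α →
        (2 * u = 1 ∨ 2 * u = -1) → False := by
      intro ξ hξ u v hξc hu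
      obtain ⟨δ, hδ2⟩ := Ideal.mem_span_singleton'.mp (hspan2 ▸ hξ)
      obtain ⟨e, f, t3, n3, hδc, ht3, hn3⟩ := coords δ
      have hexp : algebraMap ℚ F (2 * e) + algebraMap ℚ F (2 * f) * α
          = algebraMap ℚ F u + algebraMap ℚ F v * α := by
        have hF : (δ : F) * 2 = (ξ : F) := by
          have := congrArg (algebraMap (𝓞 F) F) hδ2
          simpa only [map_mul, map_ofNat, ← NumberField.RingOfIntegers.coe_eq_algebraMap] using this
        rw [hδc, hξc] at hF
        simp only [map_mul, map_sub, map_add, map_pow, map_ofNat, map_one]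
        linear_combination hF
      have he : 2 * e = u := (coords_unique hα hexp).1
      have ht3u : (t3 : ℚ) = u := by rw [ht3, he]
      have h2t3 : ((2 * t3 : ℤ) : ℚ) = 2 * u := by push_cast; rw [ht3u]
      rcases hu with hu | hu
      · rw [hu] at h2t3
        have : (2 * t3 : ℤ) = 1 := by exact_mod_cast h2t3
        omega
      · rw [hu] at h2t3
        have : (2 * t3 : ℤ) = -1 := by exact_mod_cast h2t3
        omega
    rcases hP.mem_or_mem h64P with hmem | hmem
    · exact oddcase ω hmem (1/2) (1/2) (by rw [hω]; rfl) (by norm_num)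
    · refine oddcase (ω - 1) hmem (-(1/2)) (1/2) ?_ (by norm_num)
      simp only [map_sub, map_one]
      rw [hω]
      simp only [map_sub, map_one, map_neg, map_mul, map_add, map_div₀, map_ofNat,
        NumberField.RingOfIntegers.map_mk]
      ring
  }
end
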